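/- Let F ≥ 2 and 2 + 1/√(F+1) ≤ γ ≤ (F²+F−1)/√(F+1). With n_1 = F+1, Δ(j) = ⌈γ√(n_j)⌉, n_{j+1} = n_j + Δ(j), and l_t = c·log t for c > 0, one has l_{n_{b+1}}/Δ(b) + ∑_{j=2}^{b} l_{n_j}·(1/Δ(j−1) − 1/Δ(j)) ≤ c·(log(F+1)/⌈γ√(F+1)⌉ + log(n_b)). -/

import Mathlib

/-!
Summation by parts turns the left-hand side into
`l_{n_1}/Δ(1) + ∑_{j=1}^{b} (l_{n_{j+1}} - l_{n_j})/Δ(j)`. Since `Δ(j) ≥ 1` and `l` is increasing,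
each increment can only shrink, and the sum telescopes to `l_{n_{b+1}} - l_{n_1}`. Finally
`γ ≤ F √(F+1) ≤ F √(n_b)` gives `Δ(b) ≤ F n_b`, so `n_{b+1} ≤ (F+1) n_b` and
`log n_{b+1} - log (F+1) ≤ log n_b`.
-/

open Real

/-- The difference between the two sides grows by `(f (m+2) - f (m+1)) * (u (m+1) - 1) ≤ 0`
from `m` to `m + 1`. -/
theorem abel_sum_le_of_monotone_of_le_one (f u : ℕ → ℝ) (hf : ∀ j ≥ 1, f j ≤ f (j + 1))
    (hu : ∀ j ≥ 1, u j ≤ 1) (m : ℕ) (hm : 1 ≤ m) :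
    f (m + 1) * u m + ∑ j ∈ Finset.Icc 2 m, f j * (u (j - 1) - u j)
      ≤ f 1 * u 1 + (f (m + 1) - f 1) := by
  induction m, hm using Nat.le_induction with
  | base =>
    rw [Finset.Icc_eq_empty (by omega), Finset.sum_empty]
    nlinarith [hf 1 le_rfl, hu 1 le_rfl]
  | succ k hk ih =>
    rw [Finset.sum_Icc_succ_top (by omega), Nat.add_sub_cancel]
    nlinarith [hf (k + 1) (by omega), hu (k + 1) (by omega)]

theorem le_mul_sqrt_of_le_div_sqrt {x γ : ℝ} (hx : 0 < x + 1)
    (hγ : γ ≤ (x ^ 2 + x - 1) / √(x + 1)) : γ ≤ x * √(x + 1) := by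
  have hsqrt : 0 < √(x + 1) := sqrt_pos.mpr hx
  refine hγ.trans ((div_le_iff₀ hsqrt).mpr ?_)
  nlinarith [mul_self_sqrt hx.le]

theorem nat_ceil_mul_sqrt_le {F N : ℕ} {γ : ℝ} (hγ : γ ≤ F * √((F : ℝ) + 1)) (hN : F + 1 ≤ N) :
    ⌈γ * √(N : ℝ)⌉₊ ≤ F * N := by
  have hsqrt : √((F : ℝ) + 1) ≤ √(N : ℝ) := sqrt_le_sqrt (by exact_mod_cast hN)
  have hγN : γ ≤ F * √(N : ℝ) := hγ.trans (by gcongr)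
  refine Nat.ceil_le.mpr ?_
  calc γ * √(N : ℝ) ≤ F * √(N : ℝ) * √(N : ℝ) := by gcongr
    _ = ((F * N : ℕ) : ℝ) := by push_cast; rw [mul_assoc, mul_self_sqrt (Nat.cast_nonneg N)]

theorem stmt_18_general (F : ℕ) (γ : ℝ)
    (hγl : 2 + 1 / Real.sqrt ((F : ℝ) + 1) ≤ γ)
    (hγu : γ ≤ ((F : ℝ) ^ 2 + (F : ℝ) - 1) / Real.sqrt ((F : ℝ) + 1))
    (c : ℝ) (hc : 0 < c)
    (n Δ : ℕ → ℕ) (hn1 : n 1 = F + 1)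
    (hΔ : ∀ j ≥ 1, Δ j = ⌈γ * Real.sqrt (n j)⌉₊)
    (hrec : ∀ j ≥ 1, n (j + 1) = n j + Δ j)
    (b : ℕ) (hb : 1 ≤ b) :
    c * Real.log (n (b + 1) : ℝ) / (Δ b : ℝ)
      + ∑ j ∈ Finset.Icc 2 b, c * Real.log (n j : ℝ) * (1 / (Δ (j - 1) : ℝ) - 1 / (Δ j : ℝ))
      ≤ c * (Real.log ((F : ℝ) + 1) / (Δ 1 : ℝ) + Real.log (n b : ℝ)) := by
  have hγ : 0 < γ := lt_of_lt_of_le (by positivity) hγl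
  have hn : ∀ j ≥ 1, F + 1 ≤ n j := by
    intro j hj
    induction j, hj using Nat.le_induction with
    | base => rw [hn1]
    | succ k hk ih => rw [hrec k hk]; omega
  have hΔ_pos : ∀ j ≥ 1, 1 ≤ Δ j := fun j hj => by
    rw [hΔ j hj, Nat.one_le_ceil_iff]
    have : (0 : ℝ) < n j := by exact_mod_cast (by have := hn j hj; omega : 0 < n j)
    positivity
  have hlog_mono : ∀ j ≥ 1, c * log (n j) ≤ c * log (n (j + 1)) := fun j hj => by
    have : (0 : ℝ) < n j := by exact_mod_cast (by have := hn j hj; omega : 0 < n j)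
    gcongr
    exact_mod_cast (by rw [hrec j hj]; omega : n j ≤ n (j + 1))
  have hnext : n (b + 1) ≤ (F + 1) * n b := by
    have := nat_ceil_mul_sqrt_le (le_mul_sqrt_of_le_div_sqrt (by positivity) hγu) (hn b hb)
    rw [hrec b hb, hΔ b hb]
    nlinarith
  have hlog_next : log (n (b + 1)) ≤ log ((F : ℝ) + 1) + log (n b) := by
    have : (0 : ℝ) < n (b + 1) := by exact_mod_cast (by have := hn (b + 1) (by omega); omega)
    rw [← log_mul (by positivity) (by exact_mod_cast (by have := hn b hb; omega : n b ≠ 0))]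
    exact log_le_log this (by exact_mod_cast hnext)
  have hsum := abel_sum_le_of_monotone_of_le_one (fun j => c * log (n j)) (fun j => 1 / (Δ j : ℝ))
    hlog_mono (fun j hj => div_le_one_of_le₀ (by exact_mod_cast hΔ_pos j hj) (Nat.cast_nonneg _)) b hb
  simp only [hn1, Nat.cast_add, Nat.cast_one, ← div_eq_mul_one_div] at hsum
  rw [mul_add, ← mul_div_assoc]
  linarith [mul_le_mul_of_nonneg_left hlog_next hc.le]

theorem stmt_18 (F : ℕ) (hF : 2 ≤ F) (γ : ℝ)
    (hγl : 2 + 1 / Real.sqrt ((F : ℝ) + 1) ≤ γ)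
    (hγu : γ ≤ ((F : ℝ) ^ 2 + (F : ℝ) - 1) / Real.sqrt ((F : ℝ) + 1))
    (c : ℝ) (hc : 0 < c)
    (n Δ : ℕ → ℕ) (hn1 : n 1 = F + 1)
    (hΔ : ∀ j ≥ 1, Δ j = ⌈γ * Real.sqrt (n j)⌉₊)
    (hrec : ∀ j ≥ 1, n (j + 1) = n j + Δ j)
    (b : ℕ) (hb : 1 ≤ b) :
    c * Real.log (n (b + 1) : ℝ) / (Δ b : ℝ)
      + ∑ j ∈ Finset.Icc 2 b, c * Real.log (n j : ℝ) * (1 / (Δ (j - 1) : ℝ) - 1 / (Δ j : ℝ))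
      ≤ c * (Real.log ((F : ℝ) + 1) / (Δ 1 : ℝ) + Real.log (n b : ℝ)) :=
  stmt_18_general F γ hγl hγu c hc n Δ hn1 hΔ hrec b hb
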